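/- Every real n×n matrix M (indexed by Fin n) admits a pivoted LU decomposition: there exist a permutation σ of Fin n with associated permutation matrix P (P i j = 1 if j = σ i and 0 otherwise), a lower triangular matrix L (L i j = 0 whenever i < j), and an upper triangular matrix U (U i j = 0 whenever j < i) such that P·M = L·U. (This is the pivoted LU property encoded by HADAD's LUP constraint.) -/
import Mathlib


open Matrix BigOperators

private lemma perm_mul_apply {n : ℕ} (σ : Equiv.Perm (Fin n))
    (M : Matrix (Fin n) (Fin n) ℝ) :
    (Matrix.of fun i j => if j = σ i then (1 : ℝ) else 0) * M
      = Matrix.of fun i j => M (σ i) j := by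
  ext i j
  simp [Matrix.mul_apply, ite_mul]

private lemma lup_aux : ∀ (n : ℕ) (M : Matrix (Fin n) (Fin n) ℝ),
    ∃ (σ : Equiv.Perm (Fin n)) (L U : Matrix (Fin n) (Fin n) ℝ),
      (∀ i j, i < j → L i j = 0) ∧
      (∀ i j, j < i → U i j = 0) ∧
      (Matrix.of fun i j => if j = σ i then (1 : ℝ) else 0) * M = L * U := by
  intro n
  induction n with
  | zero =>
      intro M
      exact ⟨1, 0, 0, by intro i; exact i.elim0, by intro i; exact i.elim0,
        by ext i; exact i.elim0⟩
  | succ n ih =>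
      intro M
      -- choose pivot row i0
      obtain ⟨i0, hi0⟩ : ∃ i0 : Fin (n + 1), (M i0 0 = 0 → ∀ i, M i 0 = 0) := by
        by_cases h : ∃ i, M i 0 ≠ 0
        · obtain ⟨i, hi⟩ := h
          exact ⟨i, fun h0 => absurd h0 hi⟩
        · push_neg at h
          exact ⟨0, fun _ => h⟩
      set e : Equiv.Perm (Fin (n + 1)) := Equiv.swap 0 i0 with he
      set M' : Matrix (Fin (n + 1)) (Fin (n + 1)) ℝ :=
        Matrix.of fun i j => M (e i) j with hM'
      set a : ℝ := M' 0 0 with ha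
      set r : Fin n → ℝ := fun j => M' 0 j.succ with hr
      set c : Fin n → ℝ := fun i => M' i.succ 0 with hc
      have hazero : a = 0 → ∀ i, M' i 0 = 0 := by
        intro h0 i
        have : M i0 0 = 0 := by simpa [hM', ha, he] using h0
        exact hi0 this (e i)
      -- Schur complement
      set S : Matrix (Fin n) (Fin n) ℝ :=
        Matrix.of fun i j => M' i.succ j.succ - c i * r j / a with hS
      obtain ⟨τ, L', U', hL', hU', hLU'⟩ := ih S
      have hPS : ∀ i j, S (τ i) j = (L' * U') i j := by
        intro i j
        have := congrFun (congrFun hLU' i) j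
        rw [perm_mul_apply] at this
        simpa using this
      refine ⟨((finSuccEquiv n).symm.permCongr τ.optionCongr).trans e,
        Matrix.of (Fin.cons (Fin.cons 1 (fun _ => 0))
          (fun i' => Fin.cons (c (τ i') / a) (fun j' => L' i' j'))),
        Matrix.of (Fin.cons (Fin.cons a r)
          (fun i' => Fin.cons 0 (fun j' => U' i' j'))), ?_, ?_, ?_⟩
      · intro i j hij
        induction i using Fin.cases with
        | zero =>
            induction j using Fin.cases with
            | zero => exact absurd hij (lt_irrefl _)
            | succ j' => simp
        | succ i' =>
            induction j using Fin.cases with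
            | zero => exact absurd hij (by simp [Fin.lt_def])
            | succ j' =>
                have : i' < j' := by simpa [Fin.succ_lt_succ_iff] using hij
                simp [hL' i' j' this]
      · intro i j hij
        induction i using Fin.cases with
        | zero =>
            induction j using Fin.cases with
            | zero => exact absurd hij (lt_irrefl _)
            | succ j' => exact absurd hij (by simp [Fin.lt_def])
        | succ i' =>
            induction j using Fin.cases with
            | zero => simp
            | succ j' =>
                have : j' < i' := by simpa [Fin.succ_lt_succ_iff] using hij
                simp [hU' i' j' this]
      · rw [perm_mul_apply]
        ext i j
        have hperm0 : (((finSuccEquiv n).symm.permCongr τ.optionCongr).trans e) 0 = e 0 := by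
          simp [Equiv.permCongr_apply]
        have hpermS : ∀ i' : Fin n,
            (((finSuccEquiv n).symm.permCongr τ.optionCongr).trans e) i'.succ
              = e (τ i').succ := by
          intro i'
          simp [Equiv.permCongr_apply]
        rw [Matrix.mul_apply, Fin.sum_univ_succ]
        induction i using Fin.cases with
        | zero =>
            induction j using Fin.cases with
            | zero =>
                simp [hperm0, hM', ha]
            | succ j' =>
                simp [hperm0, hM', hr]
        | succ i' =>
            induction j using Fin.cases with
            | zero =>
                have hca : c (τ i') / a * a = c (τ i') := by
                  rcases eq_or_ne a 0 with h0 | h0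
                  · rw [h0, mul_zero]
                    exact (hazero h0 (τ i').succ).symm
                  · exact div_mul_cancel₀ _ h0
                simp only [hpermS, Matrix.of_apply]
                simpa [hM', hc] using hca.symm
            | succ j' =>
                have key := hPS i' j'
                rw [Matrix.mul_apply] at key
                have : M' (τ i').succ j'.succ
                    = c (τ i') / a * r j' + ∑ k, L' i' k * U' k j' := by
                  have expand : S (τ i') j' = M' (τ i').succ j'.succ - c (τ i') * r j' / a := rfl
                  have : M' (τ i').succ j'.succ
                      = c (τ i') * r j' / a + (L' * U') i' j' := by
                    rw [← hPS i' j', expand]; ring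
                  rw [this, Matrix.mul_apply, div_mul_eq_mul_div]
                simpa [hpermS, hM'] using this

/-- Pivoted LU decomposition: for every real square matrix M there are a
    permutation matrix P, a lower triangular L and an upper triangular U
    with P·M = L·U. -/
theorem lup_decomposition
    {n : ℕ} (M : Matrix (Fin n) (Fin n) ℝ) :
    ∃ (σ : Equiv.Perm (Fin n)) (L U : Matrix (Fin n) (Fin n) ℝ),
      (∀ i j, i < j → L i j = 0) ∧
      (∀ i j, j < i → U i j = 0) ∧
      (Matrix.of fun i j => if j = σ i then (1 : ℝ) else 0) * M = L * U := by
  exact lup_aux n M
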